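/- arXiv:2112.07524 — 2 statements merged into one kernel-verified Lean document; each statement's English description precedes it below -/
import Mathlib

section
/- A graph G has edge-treewidth at most 2 if and only if G is a cactus graph (every edge of G belongs to at most one cycle). -/
open Classical

/-- A finite loopless multigraph: a finite vertex type, a finite edge type, and an
endpoint function assigning to every edge an unordered pair of distinct vertices. -/
structure FinMGraph where
  V : Type
  E : Type
  [fV : Fintype V]
  [fE : Fintype E]
  [dV : DecidableEq V]
  ends : E → Sym2 V
  loopless : ∀ e, ¬ (ends e).IsDiag

attribute [instance] FinMGraph.fV FinMGraph.fE FinMGraph.dV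

namespace FinMGraph

variable (G : FinMGraph)

/-- One-step adjacency inside the vertex set `S` (i.e. in the induced subgraph `G[S]`). -/
def stepIn (S : Set G.V) (a b : G.V) : Prop :=
  a ∈ S ∧ b ∈ S ∧ ∃ e : G.E, G.ends e = s(a, b)

/-- The vertex set of the connected component of `v` in the induced subgraph `G[S]`. -/
def comp (S : Set G.V) (v : G.V) : Set G.V :=
  {w | Relation.ReflTransGen (G.stepIn S) v w}

/-- The number of edges (counted with multiplicity) with exactly one endpoint in `X`. -/
noncomputable def cut (X : Set G.V) : ℕ :=
  Nat.card {e : G.E // ∃ a b, G.ends e = s(a, b) ∧ a ∈ X ∧ b ∉ X}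

/-- For a layout `L` (a linear ordering of the vertices) the set `S_i` of vertices
occurring at position `i` or later. -/
def tail (L : Fin (Fintype.card G.V) ≃ G.V) (i : Fin (Fintype.card G.V)) : Set G.V :=
  {v | i ≤ L.symm v}

/-- The cost `δ^ec(i) = |E_G(C_G(S_i, x_i))|` of position `i` in the layout `L`. -/
noncomputable def cost (L : Fin (Fintype.card G.V) ≃ G.V) (i : Fin (Fintype.card G.V)) : ℕ :=
  G.cut (G.comp (G.tail L i) (L i))

/-- The edge-treewidth of `G`: the minimum over all layouts of the maximum cost. -/
noncomputable def etw : ℕ :=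
  sInf {k | ∃ L : Fin (Fintype.card G.V) ≃ G.V, ∀ i, G.cost L i ≤ k}

end FinMGraph

namespace FinMGraph

variable (G : FinMGraph)

/-- `G` is a forest: every edge is a bridge, i.e. after removing an edge its two
endpoints are no longer connected. -/
def IsForest : Prop :=
  ∀ (e : G.E) (a b : G.V), G.ends e = s(a, b) →
    ¬ Relation.ReflTransGen (fun x y => ∃ f : G.E, f ≠ e ∧ G.ends f = s(x, y)) a b

/-- A cycle of length `k` in `G`, given by an injective cyclic sequence of vertices and an
injective sequence of distinct edges joining consecutive vertices. -/
def IsCycleOn (k : ℕ) (v : ZMod k → G.V) (f : ZMod k → G.E) : Prop :=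
  2 ≤ k ∧ Function.Injective v ∧ Function.Injective f ∧
    ∀ i : ZMod k, G.ends (f i) = s(v i, v (i + 1))

/-- `G` is a cactus: every edge belongs to at most one cycle, i.e. any two cycles
sharing an edge have the same edge set. -/
def IsCactus : Prop :=
  ∀ (k₁ : ℕ) (v₁ : ZMod k₁ → G.V) (f₁ : ZMod k₁ → G.E)
    (k₂ : ℕ) (v₂ : ZMod k₂ → G.V) (f₂ : ZMod k₂ → G.E),
    G.IsCycleOn k₁ v₁ f₁ → G.IsCycleOn k₂ v₂ f₂ →
    (∃ e, e ∈ Set.range f₁ ∧ e ∈ Set.range f₂) → Set.range f₁ = Set.range f₂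

/-- A walk from `a` to `b` using the listed edges, in order. -/
inductive Walk : G.V → G.V → List G.E → Prop
  | nil (v : G.V) : Walk v v []
  | cons {a b c : G.V} {e : G.E} {es : List G.E} :
      G.ends e = s(a, b) → Walk b c es → Walk a c (e :: es)

/-- `H` is a subgraph of `G`. -/
def IsSubgraphOf (H : FinMGraph) : Prop :=
  ∃ (φ : H.V ↪ G.V) (ψ : H.E ↪ G.E), ∀ e, G.ends (ψ e) = (H.ends e).map φ

/-- The edge-degree of `v`: the number of incident edges, counted with multiplicity. -/
noncomputable def edeg (v : G.V) : ℕ :=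
  Nat.card {e : G.E // v ∈ G.ends e}

/-- The vertex-degree of `v`: the number of distinct neighbours of `v`. -/
noncomputable def vdeg (v : G.V) : ℕ :=
  Nat.card {w : G.V // w ≠ v ∧ ∃ e : G.E, G.ends e = s(v, w)}

/-- `H` is obtained from `G` by contracting one edge `e = {x,y}` whose endpoints both
have vertex-degree two and edge-degree two. -/
def ContractStep (H : FinMGraph) : Prop :=
  ∃ (x y : G.V) (e : G.E), G.ends e = s(x, y) ∧
    G.vdeg x = 2 ∧ G.edeg x = 2 ∧ G.vdeg y = 2 ∧ G.edeg y = 2 ∧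
    ∃ (φ : G.V → H.V) (ψ : {f : G.E // f ≠ e} ≃ H.E),
      Function.Surjective φ ∧
      (∀ v w : G.V, φ v = φ w ↔ (v = w ∨ (v = x ∧ w = y) ∨ (v = y ∧ w = x))) ∧
      ∀ f : {f : G.E // f ≠ e}, H.ends (ψ f) = (G.ends f.1).map φ

/-- `H` is a weak topological minor of `G`: `H` is obtained from a subgraph of `G` by
repeatedly contracting edges whose endpoints have vertex-degree two and edge-degree two. -/
def IsWeakTopMinorOf (H G : FinMGraph) : Prop :=
  ∃ S : FinMGraph, S.IsSubgraphOf G ∧ Relation.ReflTransGen FinMGraph.ContractStep S H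

/-- The induced subgraph `G[S]` is connected. -/
def ConnectedOn (S : Set G.V) : Prop :=
  ∀ a ∈ S, ∀ b ∈ S, Relation.ReflTransGen (G.stepIn S) a b

/-- `G` is connected. -/
def Connected : Prop := G.ConnectedOn Set.univ

/-- `G` is biconnected: nonempty and removing any single vertex leaves it connected. -/
def Biconnected : Prop :=
  Nonempty G.V ∧ ∀ v : G.V, G.ConnectedOn {w | w ≠ v}

/-- The minimum cost over layouts whose first vertex is `u`. -/
noncomputable def etwFrom (u : G.V) : ℕ :=
  sInf {k | ∃ L : Fin (Fintype.card G.V) ≃ G.V, (L.symm u : ℕ) = 0 ∧ ∀ i, G.cost L i ≤ k}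

/-- The sub-multigraph of `G` on the same vertex set whose edges are those in `F`. -/
noncomputable def restrictE (F : Set G.E) : FinMGraph :=
  { V := G.V, E := {e : G.E // e ∈ F}, ends := fun e => G.ends e.1,
    loopless := fun e => G.loopless e.1 }

/-- Two edges lie in a common block: they are equal or some cycle contains both. -/
def SameBlock (e f : G.E) : Prop :=
  e = f ∨ ∃ (k : ℕ) (v : ZMod k → G.V) (g : ZMod k → G.E),
    G.IsCycleOn k v g ∧ e ∈ Set.range g ∧ f ∈ Set.range g

/-- The block of `G` containing the edge `e`. -/
noncomputable def blockOf (e : G.E) : FinMGraph :=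
  G.restrictE {f | G.SameBlock e f}

/-- The number of vertices outside `X` having a neighbour in `X`. -/
noncomputable def ncut (X : Set G.V) : ℕ :=
  Nat.card {v : G.V // v ∉ X ∧ ∃ x ∈ X, ∃ e : G.E, G.ends e = s(v, x)}

/-- Treewidth, via its layout characterization: the minimum over layouts of the
maximum of `|N_G(C_G(S_i, x_i))|`. -/
noncomputable def twl : ℕ :=
  sInf {k | ∃ L : Fin (Fintype.card G.V) ≃ G.V,
    ∀ i, G.ncut (G.comp (G.tail L i) (L i)) ≤ k}

/-- The maximum edge-degree of `G`. -/
noncomputable def maxEdeg : ℕ :=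
  sSup {m | ∃ v : G.V, m = G.edeg v}

end FinMGraph

/-- A tree-layout of `G`: a rooted tree (given by a parent function under which every
node eventually reaches the root) together with an injective mapping `τ` of the vertices
of `G` into the nodes such that the endpoints of every edge are mapped to comparable
(ancestor/descendant) nodes. -/
structure TreeLayout (G : FinMGraph) where
  T : Type
  par : T → T
  root : T
  par_root : par root = root
  reaches_root : ∀ t : T, ∃ n : ℕ, par^[n] t = root
  τ : G.V → T
  inj : Function.Injective τ
  comparable : ∀ (e : G.E) (a b : G.V), G.ends e = s(a, b) →
    (∃ n : ℕ, par^[n] (τ a) = τ b) ∨ (∃ n : ℕ, par^[n] (τ b) = τ a)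

/-- The set `X_T(u)` of vertices of `G` mapped to descendants of the node `u`. -/
def TreeLayout.region {G : FinMGraph} (TL : TreeLayout G) (u : TL.T) : Set G.V :=
  {x | ∃ n : ℕ, TL.par^[n] (TL.τ x) = u}

/-- The theta graph `θ k`: two vertices joined by `k` parallel edges. -/
def theta (k : ℕ) : FinMGraph :=
  { V := Fin 2, E := Fin k, ends := fun _ => s((0 : Fin 2), 1),
    loopless := fun _ => by rw [Sym2.mk_isDiag_iff]; decide }

/-- The cycle on `n ≥ 2` vertices. -/
def cyc (n : ℕ) (h : 2 ≤ n) : FinMGraph :=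
  letI : NeZero n := ⟨by omega⟩
  letI : Fact (1 < n) := ⟨h⟩
  { V := ZMod n, E := ZMod n, ends := fun i => s(i, i + 1),
    loopless := fun i => by
      rw [Sym2.mk_isDiag_iff]
      exact fun hh => one_ne_zero (left_eq_add.mp hh) }

/-- The multigraph `Z_n^3`, obtained from the cycle on `n ≥ 2` vertices by doubling
every edge. -/
def Z3 (n : ℕ) (h : 2 ≤ n) : FinMGraph :=
  letI : NeZero n := ⟨by omega⟩
  letI : Fact (1 < n) := ⟨h⟩
  { V := ZMod n, E := ZMod n × Fin 2, ends := fun p => s(p.1, p.1 + 1),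
    loopless := fun p => by
      rw [Sym2.mk_isDiag_iff]
      exact fun hh => one_ne_zero (left_eq_add.mp hh) }

/-!
If two distinct cycles share an edge, walk along the second one from an edge that is not on the
first, in both directions, until the first cycle is met: this gives two distinct vertices `p`, `q`
of the first cycle joined by a walk avoiding its edges. In any layout, the component chosen at the
later of `p`, `q` contains it but not the other, so it is crossed twice by the first cycle and
once by that walk, and its cost is at least `3`.

Conversely, lay the vertices out so that every prefix meets each component of `G` in a connected
set (append a vertex adjacent to the prefix whenever there is one). The component `C` chosen at a
position and the component of the prefix containing the far ends of the edges leaving `C` are then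
disjoint connected sets. Any two edges between such sets close up, through paths inside the sets,
to a cycle containing no other edge between them; so in a cactus two such cycles through a common
edge coincide, and at most two edges leave `C`.
-/

theorem Relation.ReflTransGen.exists_rel_mem_notMem {α : Type*} {r : α → α → Prop} {X : Set α}
    {a b : α} (h : Relation.ReflTransGen r a b) (ha : a ∈ X) (hb : b ∉ X) :
    ∃ c ∈ X, ∃ d ∉ X, r c d := by
  induction h with
  | refl => exact absurd ha hb
  | @tail c d _ hcd ih =>
    by_cases hc : c ∈ X
    · exact ⟨c, hc, d, hb, hcd⟩
    · exact ih hc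

theorem ZMod.exists_mem_and_add_one_notMem {α : Type*} {k : ℕ} [NeZero k] {v : ZMod k → α}
    {X : Set α} {a b : ZMod k} (ha : v a ∈ X) (hb : v b ∉ X) :
    ∃ i, v i ∈ X ∧ v (i + 1) ∉ X := by
  by_contra! h
  have hall : ∀ n : ℕ, v (a + n) ∈ X := by
    intro n
    induction n with
    | zero => simpa using ha
    | succ n ih => simpa [add_assoc] using h _ ih
  exact hb (by simpa using hall (b - a).val)

theorem ZMod.range_comp_val {α : Type*} {k : ℕ} [NeZero k] (φ : ℕ → α) :
    Set.range (fun i : ZMod k => φ i.val) = φ '' Set.Iio k := by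
  ext x
  constructor
  · rintro ⟨i, rfl⟩
    exact ⟨i.val, ZMod.val_lt i, rfl⟩
  · rintro ⟨t, ht, rfl⟩
    exact ⟨t, show φ (t : ZMod k).val = φ t by rw [ZMod.val_cast_of_lt ht]⟩

theorem ZMod.add_one_add_natCast_sub_one {k : ℕ} [NeZero k] (j : ZMod k) :
    j + 1 + ((k - 1 : ℕ) : ZMod k) = j := by
  rw [add_assoc, ← Nat.cast_one (R := ZMod k), ← Nat.cast_add, Nat.add_sub_cancel' NeZero.one_le,
    ZMod.natCast_self, add_zero]

theorem ZMod.exists_add_one_add_natCast_eq {k : ℕ} [NeZero k] {i j : ZMod k} (h : i ≠ j) :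
    ∃ t : ℕ, t + 1 < k ∧ j + 1 + t = i := by
  refine ⟨(i - (j + 1)).val, lt_of_le_of_ne (ZMod.val_lt _) fun ht => h ?_, by simp⟩
  rw [← ZMod.add_one_add_natCast_sub_one j, show k - 1 = (i - (j + 1)).val by omega]
  simp

theorem image_Iio_ne_univ {α : Type*} [Fintype α] (x : ℕ → α) {n : ℕ}
    (hn : n < Fintype.card α) : x '' Set.Iio n ≠ Set.univ := by
  intro h
  have hsurj : Function.Surjective fun i : Fin n => x i := fun v => by
    obtain ⟨t, ht, rfl⟩ := h.symm ▸ Set.mem_univ v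
    exact ⟨⟨t, ht⟩, rfl⟩
  have := Fintype.card_le_of_surjective _ hsurj
  rw [Fintype.card_fin] at this
  omega

namespace FinMGraph

variable {G : FinMGraph}

instance (S : Set G.V) : Std.Symm (G.stepIn S) :=
  ⟨fun _ _ ⟨ha, hb, e, he⟩ => ⟨hb, ha, e, he.trans Sym2.eq_swap⟩⟩

lemma mem_comp_self (S : Set G.V) (v : G.V) : v ∈ G.comp S v :=
  Relation.ReflTransGen.refl

lemma comp_closed {S : Set G.V} {v u w : G.V} (hu : u ∈ G.comp S v) (h : G.stepIn S u w) :
    w ∈ G.comp S v :=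
  Relation.ReflTransGen.tail hu h

lemma comp_symm {S : Set G.V} {v w : G.V} (h : w ∈ G.comp S v) : v ∈ G.comp S w :=
  symm h

lemma comp_trans {S : Set G.V} {u v w : G.V} (hv : v ∈ G.comp S u) (hw : w ∈ G.comp S v) :
    w ∈ G.comp S u :=
  Relation.ReflTransGen.trans hv hw

lemma comp_mono {S S' : Set G.V} (hS : S ⊆ S') (v : G.V) : G.comp S v ⊆ G.comp S' v :=
  fun _ hw => Relation.ReflTransGen.mono (fun _ _ ⟨ha, hb, he⟩ => ⟨hS ha, hS hb, he⟩) _ _ hw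

lemma mem_of_mem_comp {S : Set G.V} {v w : G.V} (hv : v ∈ S) (hw : w ∈ G.comp S v) : w ∈ S := by
  induction hw with
  | refl => exact hv
  | tail _ h _ => exact h.2.1

lemma connectedOn_comp (S : Set G.V) (x : G.V) : G.ConnectedOn (G.comp S x) := by
  have hx : ∀ b ∈ G.comp S x, Relation.ReflTransGen (G.stepIn (G.comp S x)) x b := by
    intro b hb
    induction hb with
    | refl => rfl
    | @tail c d hc hcd ih => exact ih.tail ⟨hc, hc.tail hcd, hcd.2.2⟩
  exact fun a ha b hb => (symm (hx a ha)).trans (hx b hb)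

lemma comp_tail_subset (L : Fin (Fintype.card G.V) ≃ G.V) (i : Fin (Fintype.card G.V)) :
    G.comp (G.tail L i) (L i) ⊆ G.tail L i :=
  fun _ => mem_of_mem_comp (by simp [tail])

def cutE (X : Set G.V) : Set G.E :=
  {e | ∃ a b, G.ends e = s(a, b) ∧ a ∈ X ∧ b ∉ X}

lemma cut_eq_ncard (X : Set G.V) : G.cut X = (G.cutE X).ncard :=
  rfl

lemma etw_le_iff {k : ℕ} :
    G.etw ≤ k ↔ ∃ L : Fin (Fintype.card G.V) ≃ G.V, ∀ i, G.cost L i ≤ k := by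
  refine ⟨fun h => ?_, fun ⟨L, hL⟩ => Nat.sInf_le ⟨L, hL⟩⟩
  have hne : {k | ∃ L : Fin (Fintype.card G.V) ≃ G.V, ∀ i, G.cost L i ≤ k}.Nonempty :=
    ⟨Nat.card G.E, (Fintype.equivFin G.V).symm, fun _ => Finite.card_subtype_le _⟩
  obtain ⟨L, hL⟩ := Nat.sInf_mem hne
  exact ⟨L, fun i => (hL i).trans h⟩

def AdjVia (F : Set G.E) (a b : G.V) : Prop :=
  ∃ e ∈ F, G.ends e = s(a, b)

instance (F : Set G.E) : Std.Symm (G.AdjVia F) :=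
  ⟨fun _ _ ⟨e, he, h⟩ => ⟨e, he, h.trans Sym2.eq_swap⟩⟩

lemma reflTransGen_adjVia_of_forall {F : Set G.E} {w : ℕ → G.V} {m n : ℕ} (hmn : m ≤ n)
    (h : ∀ t, m ≤ t → t < n → G.AdjVia F (w t) (w (t + 1))) :
    Relation.ReflTransGen (G.AdjVia F) (w m) (w n) := by
  induction n, hmn using Nat.le_induction with
  | base => rfl
  | succ n hmn ih => exact (ih fun t h₁ h₂ => h t h₁ (by omega)).tail (h n hmn (by omega))

namespace IsCycleOn

variable {k : ℕ} {v : ZMod k → G.V} {f : ZMod k → G.E}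

lemma neZero (hC : G.IsCycleOn k v f) : NeZero k :=
  ⟨by have := hC.1; omega⟩

lemma mem_range_of_mem_ends (hC : G.IsCycleOn k v f) {e : G.E} {x : G.V}
    (he : e ∈ Set.range f) (hx : x ∈ G.ends e) : x ∈ Set.range v := by
  obtain ⟨i, rfl⟩ := he
  rw [hC.2.2.2 i, Sym2.mem_iff] at hx
  rcases hx with rfl | rfl
  exacts [⟨i, rfl⟩, ⟨i + 1, rfl⟩]

lemma ends_add_natCast (hC : G.IsCycleOn k v f) (i : ZMod k) (t : ℕ) :
    G.ends (f (i + t)) = s(v (i + t), v (i + ↑(t + 1))) := by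
  rw [hC.2.2.2, Nat.cast_succ, add_assoc]

lemma injOn_add_natCast (hC : G.IsCycleOn k v f) (i : ZMod k) :
    Set.InjOn (fun t : ℕ => v (i + t)) (Set.Iio k) := by
  intro s hs t ht hst
  have := add_left_cancel (hC.2.1 hst)
  rwa [ZMod.natCast_eq_natCast_iff', Nat.mod_eq_of_lt hs, Nat.mod_eq_of_lt ht] at this

lemma exists_two_mem_cutE (hC : G.IsCycleOn k v f) {X : Set G.V} {a b : ZMod k}
    (ha : v a ∈ X) (hb : v b ∉ X) :
    ∃ e₁ ∈ Set.range f, ∃ e₂ ∈ Set.range f, e₁ ≠ e₂ ∧ e₁ ∈ G.cutE X ∧ e₂ ∈ G.cutE X := by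
  have := hC.neZero
  obtain ⟨i, hi, hi'⟩ := ZMod.exists_mem_and_add_one_notMem ha hb
  obtain ⟨j, hj, hj'⟩ := ZMod.exists_mem_and_add_one_notMem (X := Xᶜ) hb (by simpa using ha)
  refine ⟨f i, ⟨i, rfl⟩, f j, ⟨j, rfl⟩, fun hij => hj ?_, ⟨_, _, hC.2.2.2 i, hi, hi'⟩,
    ⟨_, _, (hC.2.2.2 j).trans Sym2.eq_swap, by simpa using hj', hj⟩⟩
  rwa [← hC.2.2.1 hij]

lemma adjVia_compl_range (hC : G.IsCycleOn k v f) {e : G.E} {x y : G.V}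
    (he : G.ends e = s(x, y)) (hxy : x ∉ Set.range v ∨ y ∉ Set.range v) :
    G.AdjVia (Set.range f)ᶜ x y := by
  refine ⟨e, fun hf => ?_, he⟩
  rcases hxy with hx | hy
  · exact hx (hC.mem_range_of_mem_ends hf (he ▸ Sym2.mem_mk_left x y))
  · exact hy (hC.mem_range_of_mem_ends hf (he ▸ Sym2.mem_mk_right x y))

/-- Unroll the second cycle as `w t = v' (j + 1 + t)`, so that its edge `f' j` comes last; the
walk from the last visit `w β` of the first cycle around to its first visit `w α` is the ear. -/
lemma exists_ear {k' : ℕ} {v' : ZMod k' → G.V} {f' : ZMod k' → G.E}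
    (hC : G.IsCycleOn k v f) (hC' : G.IsCycleOn k' v' f') {e : G.E}
    (he : e ∈ Set.range f) (he' : e ∈ Set.range f') {j : ZMod k'} (hj : f' j ∉ Set.range f) :
    ∃ p ∈ Set.range v, ∃ q ∈ Set.range v, p ≠ q ∧
      Relation.ReflTransGen (G.AdjVia (Set.range f)ᶜ) p q := by
  have := hC'.neZero
  set w : ℕ → G.V := fun t => v' (j + 1 + t) with hw
  have hends := hC'.ends_add_natCast (j + 1)
  obtain ⟨i, rfl⟩ := he'
  obtain ⟨t₀, ht₀, rfl⟩ := ZMod.exists_add_one_add_natCast_eq fun h : i = j => hj (h ▸ he)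
  have hmem₀ : w t₀ ∈ Set.range v :=
    hC.mem_range_of_mem_ends he (by rw [hends]; exact Sym2.mem_mk_left _ _)
  have hmem₁ : w (t₀ + 1) ∈ Set.range v :=
    hC.mem_range_of_mem_ends he (by rw [hends]; exact Sym2.mem_mk_right _ _)
  have hex : ∃ t, w t ∈ Set.range v := ⟨t₀, hmem₀⟩
  set α := Nat.find hex
  set β := Nat.findGreatest (fun t => w t ∈ Set.range v) (k' - 1)
  have hαt₀ : α ≤ t₀ := Nat.find_min' hex hmem₀
  have hβt₀ : t₀ + 1 ≤ β := Nat.le_findGreatest (by omega) hmem₁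
  have hβk : β ≤ k' - 1 := Nat.findGreatest_le _
  refine ⟨w β, Nat.findGreatest_spec (P := fun t => w t ∈ Set.range v) (m := t₀ + 1) (by omega)
    hmem₁, w α, Nat.find_spec hex, fun h => ?_, ?_⟩
  · have := hC'.injOn_add_natCast (j + 1) (show β < k' by omega) (show α < k' by omega) h
    omega
  have hβ : Relation.ReflTransGen (G.AdjVia (Set.range f)ᶜ) (w β) (w k') := by
    refine reflTransGen_adjVia_of_forall (by omega) fun t h₁ h₂ => ?_
    rcases Nat.lt_or_ge (t + 1) k' with h | h
    · exact hC.adjVia_compl_range (hends t) (Or.inr (Nat.findGreatest_is_greatest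
        (P := fun t => w t ∈ Set.range v) (show β < t + 1 by omega) (by omega)))
    · obtain rfl : t = k' - 1 := by omega
      exact ⟨_, by rwa [ZMod.add_one_add_natCast_sub_one], hends (k' - 1)⟩
  have hα : Relation.ReflTransGen (G.AdjVia (Set.range f)ᶜ) (w 0) (w α) :=
    reflTransGen_adjVia_of_forall (Nat.zero_le _) fun t _ h =>
      hC.adjVia_compl_range (hends t) (Or.inl (Nat.find_min hex h))
  have hclosed : w k' = w 0 := by simp [hw]
  exact hβ.trans (hclosed ▸ hα)

lemma three_le_cut_of_ear (hC : G.IsCycleOn k v f) {X : Set G.V} {p q : G.V}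
    (hp : p ∈ Set.range v) (hq : q ∈ Set.range v)
    (hpq : Relation.ReflTransGen (G.AdjVia (Set.range f)ᶜ) p q) (hpX : p ∈ X) (hqX : q ∉ X) :
    3 ≤ G.cut X := by
  obtain ⟨a, rfl⟩ := hp
  obtain ⟨b, rfl⟩ := hq
  obtain ⟨e₁, he₁, e₂, he₂, h₁₂, hc₁, hc₂⟩ := hC.exists_two_mem_cutE hpX hqX
  obtain ⟨c, hc, d, hd, e₃, he₃, hends⟩ := hpq.exists_rel_mem_notMem hpX hqX
  rw [cut_eq_ncard]
  exact (Set.two_lt_ncard_iff).2 ⟨e₁, e₂, e₃, hc₁, hc₂, ⟨c, d, hends, hc, hd⟩, h₁₂,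
    fun h => he₃ (h ▸ he₁), fun h => he₃ (h ▸ he₂)⟩

end IsCycleOn

lemma exists_ear_of_not_isCactus (hG : ¬ G.IsCactus) :
    ∃ (k : ℕ) (v : ZMod k → G.V) (f : ZMod k → G.E), G.IsCycleOn k v f ∧
      ∃ p ∈ Set.range v, ∃ q ∈ Set.range v, p ≠ q ∧
        Relation.ReflTransGen (G.AdjVia (Set.range f)ᶜ) p q := by
  simp only [IsCactus, not_forall] at hG
  obtain ⟨k₁, v₁, f₁, k₂, v₂, f₂, hC₁, hC₂, ⟨e, he₁, he₂⟩, hne⟩ := hG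
  by_cases h : Set.range f₂ ⊆ Set.range f₁
  · obtain ⟨_, ⟨j, rfl⟩, hj⟩ := Set.not_subset.1 fun h' => hne (h'.antisymm h)
    exact ⟨k₂, v₂, f₂, hC₂, hC₂.exists_ear hC₁ he₂ he₁ hj⟩
  · obtain ⟨_, ⟨j, rfl⟩, hj⟩ := Set.not_subset.1 h
    exact ⟨k₁, v₁, f₁, hC₁, hC₁.exists_ear hC₂ he₁ he₂ hj⟩

lemma exists_three_le_cost_of_not_isCactus (hG : ¬ G.IsCactus)
    (L : Fin (Fintype.card G.V) ≃ G.V) : ∃ i, 3 ≤ G.cost L i := by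
  obtain ⟨k, v, f, hC, p, hp, q, hq, hne, hpq⟩ := exists_ear_of_not_isCactus hG
  have hsep : ∀ p q, p ∈ Set.range v → q ∈ Set.range v →
      Relation.ReflTransGen (G.AdjVia (Set.range f)ᶜ) p q → L.symm p < L.symm q →
      ∃ i, 3 ≤ G.cost L i := by
    refine fun p q hp hq hpq hlt => ⟨L.symm q, hC.three_le_cut_of_ear hq hp (symm hpq) ?_ ?_⟩
    · simpa using mem_comp_self _ q
    · exact fun h => (comp_tail_subset L _ h).not_gt hlt
  rcases lt_or_gt_of_ne (L.symm.injective.ne hne) with h | h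
  · exact hsep p q hp hq hpq h
  · exact hsep q p hq hp (symm hpq) h

def graphOn (A : Set G.V) : SimpleGraph G.V where
  Adj := G.stepIn A
  symm := inferInstance
  loopless := ⟨fun a ⟨_, _, e, he⟩ => G.loopless e (by rw [he, Sym2.mk_isDiag_iff])⟩

def IsPathIn (A : Set G.V) (r : ℕ) (w : ℕ → G.V) (g : ℕ → G.E) : Prop :=
  Set.InjOn w (Set.Iic r) ∧ (∀ t ≤ r, w t ∈ A) ∧ ∀ t < r, G.ends (g t) = s(w t, w (t + 1))

lemma IsPathIn.forall_mem_ends {A : Set G.V} {r : ℕ} {w : ℕ → G.V} {g : ℕ → G.E}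
    (hp : G.IsPathIn A r w g) {t : ℕ} (ht : t < r) : ∀ x ∈ G.ends (g t), x ∈ A := by
  intro x hx
  rw [hp.2.2 t ht, Sym2.mem_iff] at hx
  rcases hx with rfl | rfl
  exacts [hp.2.1 t ht.le, hp.2.1 (t + 1) ht]

lemma exists_isPathIn [Nonempty G.E] {A : Set G.V} {a b : G.V} (ha : a ∈ A)
    (h : Relation.ReflTransGen (G.stepIn A) a b) :
    ∃ (r : ℕ) (w : ℕ → G.V) (g : ℕ → G.E), w 0 = a ∧ w r = b ∧ G.IsPathIn A r w g := by
  obtain ⟨p⟩ : (G.graphOn A).Reachable a b := (SimpleGraph.reachable_iff_reflTransGen _ _).2 h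
  obtain ⟨q, hq⟩ := p.toPath
  choose! g hg using fun t (ht : t < q.length) => (q.adj_getVert_succ ht).2.2
  refine ⟨q.length, q.getVert, g, q.getVert_zero, q.getVert_length, hq.getVert_injOn, ?_, hg⟩
  rintro (_ | t) ht
  · simpa using ha
  · exact (q.adj_getVert_succ (by omega)).2.1

/-- A closed walk with distinct vertices is a cycle: for `k ≥ 3` the edges are then distinct,
for `k = 2` they must be assumed distinct. -/
lemma isCycleOn_of_closedWalk {k : ℕ} {u : ℕ → G.V} {h : ℕ → G.E} (hk : 2 ≤ k)
    (hinj : Set.InjOn u (Set.Iio k)) (hends : ∀ t < k, G.ends (h t) = s(u t, u ((t + 1) % k)))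
    (h₂ : k = 2 → h 0 ≠ h 1) :
    G.IsCycleOn k (fun i => u i.val) (fun i => h i.val) := by
  have : NeZero k := ⟨by omega⟩
  have : Fact (1 < k) := ⟨by omega⟩
  have hv : Function.Injective fun i : ZMod k => u i.val :=
    fun i j hij => ZMod.val_injective k (hinj (ZMod.val_lt i) (ZMod.val_lt j) hij)
  have hcyc : ∀ i : ZMod k, G.ends (h i.val) = s(u i.val, u (i + 1).val) := by
    intro i
    rw [hends _ (ZMod.val_lt i), ZMod.val_add, ZMod.val_one]
  refine ⟨hk, hv, fun i j hij => ?_, hcyc⟩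
  rcases Sym2.eq_iff.1 ((hcyc i).symm.trans ((congrArg G.ends hij).trans (hcyc j))) with
    ⟨hij', -⟩ | ⟨hi, hj⟩
  · exact hv hij'
  -- otherwise `i = j + 1` and `j = i + 1`, so `2 = 0` in `ZMod k`
  have h2 : ((2 : ℕ) : ZMod k) = 0 := by
    have hi' : i = j + 1 := hv hi
    have hj' : i + 1 = j := hv hj
    push_cast
    linear_combination hj' - hi'
  obtain rfl : k = 2 :=
    le_antisymm (Nat.le_of_dvd two_pos ((ZMod.natCast_eq_zero_iff _ _).1 h2)) hk
  refine ZMod.val_injective 2 (by_contra fun hne => h₂ rfl ?_)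
  replace hij : h i.val = h j.val := hij
  have := ZMod.val_lt i
  have := ZMod.val_lt j
  rcases show (i.val = 0 ∧ j.val = 1) ∨ (i.val = 1 ∧ j.val = 0) by omega with ⟨h0, h1⟩ | ⟨h0, h1⟩
  · rwa [h0, h1] at hij
  · rw [h0, h1] at hij
    exact hij.symm

lemma injOn_ite_le_of_disjoint {α : Type*} {A B : Set α} (hAB : Disjoint A B) {r s : ℕ}
    {w w' : ℕ → α} (hw : Set.InjOn w (Set.Iic r)) (hw' : Set.InjOn w' (Set.Iic s))
    (hwA : ∀ t ≤ r, w t ∈ A) (hw'B : ∀ t ≤ s, w' t ∈ B) :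
    Set.InjOn (fun t => if t ≤ r then w t else w' (t - (r + 1))) (Set.Iio (r + s + 2)) := by
  intro t ht t' ht' htt'
  simp only [Set.mem_Iio] at ht ht'
  simp only at htt'
  split_ifs at htt' with h₁ h₂ h₂
  · exact hw h₁ h₂ htt'
  · exact absurd htt' (hAB.ne_of_mem (hwA _ h₁) (hw'B _ (by omega)))
  · exact absurd htt'.symm (hAB.ne_of_mem (hwA _ h₂) (hw'B _ (by omega)))
  · have := hw' (show t - (r + 1) ≤ s by omega) (show t' - (r + 1) ≤ s by omega) htt'
    omega

lemma exists_cycle_of_isPathIn {A B : Set G.V} (hAB : Disjoint A B) {r s : ℕ}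
    {w w' : ℕ → G.V} {g g' : ℕ → G.E} (hp : G.IsPathIn A r w g) (hq : G.IsPathIn B s w' g')
    {e₁ e₂ : G.E} (he₁ : G.ends e₁ = s(w' s, w 0)) (he₂ : G.ends e₂ = s(w r, w' 0))
    (hne : e₁ ≠ e₂) :
    ∃ (k : ℕ) (v : ZMod k → G.V) (f : ZMod k → G.E), G.IsCycleOn k v f ∧
      e₁ ∈ Set.range f ∧ e₂ ∈ Set.range f ∧
        ∀ e ∈ Set.range f, e = e₁ ∨ e = e₂ ∨ (∃ t < r, e = g t) ∨ ∃ t < s, e = g' t := by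
  set u : ℕ → G.V := fun t => if t ≤ r then w t else w' (t - (r + 1)) with hu
  set h : ℕ → G.E := fun t =>
    if t < r then g t else if t = r then e₂ else if t ≤ r + s then g' (t - (r + 1)) else e₁
    with hh
  have hlast : h (r + s + 1) = e₁ := by
    simp only [hh]
    rw [if_neg (by omega), if_neg (by omega), if_neg (by omega)]
  have hends : ∀ t < r + s + 2, G.ends (h t) = s(u t, u ((t + 1) % (r + s + 2))) := by
    intro t ht
    rcases (show t + 1 < r + s + 2 ∨ t = r + s + 1 by omega) with ht | rfl
    · rw [Nat.mod_eq_of_lt ht]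
      rcases lt_trichotomy t r with h₁ | rfl | h₁
      · simpa [hu, hh, h₁, h₁.le, Nat.succ_le_of_lt h₁] using hp.2.2 t h₁
      · simpa [hu, hh] using he₂
      · have := hq.2.2 (t - (r + 1)) (by omega)
        rw [show t - (r + 1) + 1 = t + 1 - (r + 1) by omega] at this
        simpa [hu, hh, h₁.ne', show ¬ t < r by omega, show ¬ t ≤ r by omega,
          show t ≤ r + s by omega] using this
    · simpa [hu, hlast, show r + s + 1 - (r + 1) = s by omega] using he₁
  have hk₂ : r + s + 2 = 2 → h 0 ≠ h 1 := fun hk => by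
    obtain ⟨rfl, rfl⟩ : r = 0 ∧ s = 0 := by omega
    simpa [hh] using hne.symm
  have : NeZero (r + s + 2) := ⟨by omega⟩
  refine ⟨r + s + 2, _, _, isCycleOn_of_closedWalk (by omega)
    (injOn_ite_le_of_disjoint hAB hp.1 hq.1 hp.2.1 hq.2.1) hends hk₂, ?_, ?_, ?_⟩ <;>
    rw [ZMod.range_comp_val]
  · exact ⟨r + s + 1, by simp, hlast⟩
  · exact ⟨r, by simp only [Set.mem_Iio]; omega, by simp [hh]⟩
  rintro e ⟨t, ht, rfl⟩
  simp only [hh]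
  split_ifs with h₁ h₂ h₃
  exacts [Or.inr (Or.inr (Or.inl ⟨t, h₁, rfl⟩)), Or.inr (Or.inl rfl),
    Or.inr (Or.inr (Or.inr ⟨t - (r + 1), by omega, rfl⟩)), Or.inl rfl]

def edgesBetween (A B : Set G.V) : Set G.E :=
  {e | ∃ a ∈ A, ∃ b ∈ B, G.ends e = s(a, b)}

lemma exists_cycle_of_mem_edgesBetween {A B : Set G.V} (hA : G.ConnectedOn A)
    (hB : G.ConnectedOn B) (hAB : Disjoint A B) {e₁ e₂ : G.E} (he₁ : e₁ ∈ G.edgesBetween A B)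
    (he₂ : e₂ ∈ G.edgesBetween A B) (hne : e₁ ≠ e₂) :
    ∃ (k : ℕ) (v : ZMod k → G.V) (f : ZMod k → G.E), G.IsCycleOn k v f ∧
      e₁ ∈ Set.range f ∧ e₂ ∈ Set.range f ∧ ∀ e ∈ Set.range f,
        e = e₁ ∨ e = e₂ ∨ (∀ x ∈ G.ends e, x ∈ A) ∨ (∀ x ∈ G.ends e, x ∈ B) := by
  obtain ⟨a₁, ha₁, b₁, hb₁, hends₁⟩ := he₁
  obtain ⟨a₂, ha₂, b₂, hb₂, hends₂⟩ := he₂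
  have : Nonempty G.E := ⟨e₁⟩
  obtain ⟨r, w, g, hw0, hwr, hp⟩ := exists_isPathIn ha₁ (hA a₁ ha₁ a₂ ha₂)
  obtain ⟨s, w', g', hw'0, hw's, hq⟩ := exists_isPathIn hb₂ (hB b₂ hb₂ b₁ hb₁)
  obtain ⟨k, v, f, hC, hf₁, hf₂, hf⟩ := exists_cycle_of_isPathIn hAB hp hq
    (by rw [hends₁, hw's, hw0, Sym2.eq_swap]) (by rw [hends₂, hwr, hw'0]) hne
  refine ⟨k, v, f, hC, hf₁, hf₂, fun e he => ?_⟩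
  rcases hf e he with h | h | ⟨t, ht, rfl⟩ | ⟨t, ht, rfl⟩
  exacts [Or.inl h, Or.inr (Or.inl h), Or.inr (Or.inr (Or.inl (hp.forall_mem_ends ht))),
    Or.inr (Or.inr (Or.inr (hq.forall_mem_ends ht)))]

/-- Otherwise a third edge would lie on the cycle through the first two, yet that cycle uses no
other edge between `A` and `B`. -/
lemma IsCactus.ncard_edgesBetween_le_two (hG : G.IsCactus) {A B : Set G.V}
    (hA : G.ConnectedOn A) (hB : G.ConnectedOn B) (hAB : Disjoint A B) :
    (G.edgesBetween A B).ncard ≤ 2 := by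
  by_contra! h
  obtain ⟨e₁, e₂, e₃, h₁, h₂, h₃, h₁₂, h₁₃, h₂₃⟩ := (Set.two_lt_ncard_iff).1 h
  obtain ⟨k, v, f, hC, hf₁, hf₂, hf⟩ := exists_cycle_of_mem_edgesBetween hA hB hAB h₁ h₂ h₁₂
  obtain ⟨k', v', f', hC', hf₁', hf₃, -⟩ :=
    exists_cycle_of_mem_edgesBetween hA hB hAB h₁ h₃ h₁₃
  have hf₃' : e₃ ∈ Set.range f := hG _ _ _ _ _ _ hC hC' ⟨e₁, hf₁, hf₁'⟩ ▸ hf₃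
  obtain ⟨a, ha, b, hb, he₃⟩ := h₃
  rcases hf e₃ hf₃' with h | h | h | h
  · exact h₁₃ h.symm
  · exact h₂₃ h.symm
  · exact hAB.ne_of_mem (h b (he₃ ▸ Sym2.mem_mk_right a b)) hb rfl
  · exact hAB.ne_of_mem ha (h a (he₃ ▸ Sym2.mem_mk_left a b)) rfl

def IsComponentwiseConnected (P : Set G.V) : Prop :=
  ∀ a ∈ P, ∀ b ∈ P, b ∈ G.comp Set.univ a → b ∈ G.comp P a

lemma isComponentwiseConnected_insert {P : Set G.V} (hP : G.IsComponentwiseConnected P)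
    {v : G.V} (hv : (∃ y ∈ P, ∃ e, G.ends e = s(v, y)) ∨ ∀ y ∈ P, y ∉ G.comp Set.univ v) :
    G.IsComponentwiseConnected (insert v P) := by
  have hv' : ∀ b ∈ P, b ∈ G.comp Set.univ v → b ∈ G.comp (insert v P) v := by
    intro b hb hvb
    rcases hv with ⟨y, hy, e, he⟩ | hv
    · have hyb : b ∈ G.comp Set.univ y :=
        comp_trans (comp_symm (comp_closed (mem_comp_self _ v) ⟨trivial, trivial, e, he⟩)) hvb
      exact Relation.ReflTransGen.head ⟨Set.mem_insert _ _, Set.mem_insert_of_mem _ hy, e, he⟩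
        (comp_mono (Set.subset_insert _ _) _ (hP y hy b hb hyb))
    · exact absurd hvb (hv b hb)
  rintro a (rfl | ha) b (rfl | hb) hab
  · exact mem_comp_self _ _
  · exact hv' b hb hab
  · exact comp_symm (hv' a ha (comp_symm hab))
  · exact comp_mono (Set.subset_insert _ _) _ (hP a ha b hb hab)

lemma exists_notMem_adj_or_unreachable {P : Set G.V} (hP : P ≠ Set.univ) :
    ∃ v ∉ P, (∃ y ∈ P, ∃ e, G.ends e = s(v, y)) ∨ ∀ y ∈ P, y ∉ G.comp Set.univ v := by
  by_cases h : ∃ v ∉ P, ∃ y ∈ P, ∃ e, G.ends e = s(v, y)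
  · obtain ⟨v, hv, hy⟩ := h
    exact ⟨v, hv, Or.inl hy⟩
  obtain ⟨v, hv⟩ := (Set.ne_univ_iff_exists_notMem P).1 hP
  refine ⟨v, hv, Or.inr fun y hy hvy => h ?_⟩
  obtain ⟨c, hc, d, hd, -, -, e, he⟩ :=
    Relation.ReflTransGen.exists_rel_mem_notMem (X := Pᶜ) hvy hv (by simpa using hy)
  exact ⟨c, hc, d, not_not.1 hd, e, he⟩

/-- Grow the prefix one vertex at a time, preferring a vertex adjacent to it. -/
lemma exists_seq_isComponentwiseConnected [Nonempty G.V] :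
    ∀ n ≤ Fintype.card G.V, ∃ x : ℕ → G.V, Set.InjOn x (Set.Iio n) ∧
      ∀ m ≤ n, G.IsComponentwiseConnected (x '' Set.Iio m) := by
  intro n
  induction n with
  | zero =>
    refine fun _ => ⟨fun _ => Classical.arbitrary _, by simp, fun m hm => ?_⟩
    obtain rfl : m = 0 := by omega
    simp [IsComponentwiseConnected]
  | succ n ih =>
    intro hn
    obtain ⟨x, hinj, hx⟩ := ih (by omega)
    have hne : x '' Set.Iio n ≠ Set.univ := image_Iio_ne_univ x (by omega)
    obtain ⟨v, hv, hvP⟩ := exists_notMem_adj_or_unreachable hne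
    set x' : ℕ → G.V := fun t => if t < n then x t else v with hx'
    have himage : ∀ m ≤ n, x' '' Set.Iio m = x '' Set.Iio m := fun m hm =>
      Set.image_congr fun t ht => if_pos (lt_of_lt_of_le ht hm)
    have himage' : x' '' Set.Iio (n + 1) = insert v (x '' Set.Iio n) := by
      rw [Set.Iio_add_one_eq_Iic, ← Set.Iio_insert, Set.image_insert_eq, himage n le_rfl]
      simp [hx']
    refine ⟨x', fun s hs t ht hst => ?_, fun m hm => ?_⟩
    · simp only [Set.mem_Iio] at hs ht
      simp only [hx'] at hst
      split_ifs at hst with h₁ h₂ h₂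
      · exact hinj h₁ h₂ hst
      · exact absurd ⟨s, h₁, hst⟩ hv
      · exact absurd ⟨t, h₂, hst.symm⟩ hv
      · omega
    · rcases Nat.lt_or_ge m (n + 1) with h | h
      · rw [himage m (by omega)]
        exact hx m (by omega)
      · obtain rfl : m = n + 1 := by omega
        rw [himage']
        exact isComponentwiseConnected_insert (hx n le_rfl) hvP

lemma exists_layout_isComponentwiseConnected (G : FinMGraph) :
    ∃ L : Fin (Fintype.card G.V) ≃ G.V, ∀ i, G.IsComponentwiseConnected {v | L.symm v < i} := by
  rcases isEmpty_or_nonempty G.V with hV | hV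
  · exact ⟨(Fintype.equivFin G.V).symm, fun i => isEmptyElim ((Fintype.equivFin G.V).symm i)⟩
  obtain ⟨x, hinj, hx⟩ := exists_seq_isComponentwiseConnected (G := G) _ le_rfl
  have hbij : Function.Bijective fun i : Fin (Fintype.card G.V) => x i :=
    (Fintype.bijective_iff_injective_and_card _).2
      ⟨fun i j h => Fin.ext (hinj i.2 j.2 h), Fintype.card_fin _⟩
  set L := Equiv.ofBijective _ hbij
  refine ⟨L, fun i => ?_⟩
  convert hx i i.2.le using 1
  ext v
  constructor
  · intro hv
    exact ⟨L.symm v, hv, L.apply_symm_apply v⟩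
  · rintro ⟨t, ht, rfl⟩
    have : L.symm (x t) = ⟨t, by have := i.2; simp only [Set.mem_Iio] at ht; omega⟩ :=
      L.symm_apply_eq.2 rfl
    show L.symm (x t) < i
    rw [this, Fin.lt_def]
    exact ht

lemma IsCactus.cost_le_two (hG : G.IsCactus) {L : Fin (Fintype.card G.V) ≃ G.V}
    {i : Fin (Fintype.card G.V)} (hP : G.IsComponentwiseConnected {v | L.symm v < i}) :
    G.cost L i ≤ 2 := by
  rw [cost, cut_eq_ncard]
  set S := G.tail L i
  set C := G.comp S (L i)
  have hCS : C ⊆ S := comp_tail_subset L i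
  rw [show {v | L.symm v < i} = Sᶜ by ext; simp [S, tail]] at hP
  rcases (G.cutE C).eq_empty_or_nonempty with h | ⟨e₀, a₀, o₀, he₀, ha₀, ho₀⟩
  · simp [h]
  -- the far endpoints of the cut edges of `C` lie outside `S`, all in one component of `G[Sᶜ]`
  have hout : ∀ {e a o}, G.ends e = s(a, o) → a ∈ C → o ∉ C → o ∉ S :=
    fun he ha ho hoS => ho (comp_closed ha ⟨hCS ha, hoS, _, he⟩)
  have hreach : ∀ {e a o}, G.ends e = s(a, o) → a ∈ C → o ∈ G.comp Set.univ (L i) :=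
    fun he ha => comp_closed (comp_mono (Set.subset_univ _) _ ha) ⟨trivial, trivial, _, he⟩
  refine le_trans (Set.ncard_le_ncard ?_ (Set.toFinite _))
    (hG.ncard_edgesBetween_le_two (connectedOn_comp S (L i)) (connectedOn_comp Sᶜ o₀)
      (Set.disjoint_left.2 fun x hxC hxB => mem_of_mem_comp (hout he₀ ha₀ ho₀) hxB (hCS hxC)))
  rintro e ⟨a, o, he, ha, ho⟩
  exact ⟨a, ha, o, hP o₀ (hout he₀ ha₀ ho₀) o (hout he ha ho)
    (comp_trans (comp_symm (hreach he₀ ha₀)) (hreach he ha)), he⟩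

end FinMGraph

/-- A graph `G` has edge-treewidth at most 2 if and only if `G` is a cactus
graph (every edge of `G` belongs to at most one cycle). -/
theorem etw_le_two_iff_isCactus (G : FinMGraph) : G.etw ≤ 2 ↔ G.IsCactus := by
  rw [FinMGraph.etw_le_iff]
  refine ⟨fun ⟨L, hL⟩ => ?_, fun hG => ?_⟩
  · by_contra hG
    obtain ⟨i, hi⟩ := FinMGraph.exists_three_le_cost_of_not_isCactus hG L
    exact absurd (hL i) (by omega)
  · obtain ⟨L, hL⟩ := G.exists_layout_isComponentwiseConnected
    exact ⟨L, fun i => hG.cost_le_two (hL i)⟩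
end

section
/- Every forest G admits a layout L such that max_i δ^ec(i) ≤ 1, i.e., etw(G) ≤ 1. -/
/-!
Root every component of the forest and list the vertices by increasing distance from their
root, so that every vertex comes after its parent. The component of `x_i` in `G[S_i]` can then
only grow downwards from `x_i`, i.e. it consists of descendants of `x_i`; every edge leaving it
goes to a vertex listed before `x_i`, and the only such edge is the one from `x_i` to its parent.
-/

open Classical

open Relation SimpleGraph

theorem exists_equiv_fin_lt_of_lt {α : Type*} [Fintype α] (f : α → ℕ) :
    ∃ L : Fin (Fintype.card α) ≃ α, ∀ a b, f a < f b → L.symm a < L.symm b := by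
  let _ : LinearOrder α := LinearOrder.lift' (fun a => toLex (f a, Fintype.equivFin α a))
    fun a b h => (Fintype.equivFin α).injective (Prod.ext_iff.1 h).2
  refine ⟨(monoEquivOfFin α rfl).toEquiv, fun a b h => ?_⟩
  exact (monoEquivOfFin α rfl).symm.lt_iff_lt.2 (Prod.Lex.lt_iff.2 (Or.inl h))

namespace FinMGraph

variable {G : FinMGraph}

theorem IsForest.injective_ends (hG : G.IsForest) : Function.Injective G.ends := by
  intro e f hef
  by_contra hne
  obtain ⟨⟨a, b⟩, he⟩ := Quot.exists_rep (G.ends e)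
  exact hG e a b he.symm (.single ⟨f, Ne.symm hne, hef ▸ he.symm⟩)

section ParentLayout

variable {par : G.V → G.V} {L : Fin (Fintype.card G.V) ≃ G.V}

theorem mem_tail_of_iterate_eq (hlt : ∀ v, par v ≠ v → L.symm (par v) < L.symm v)
    {i : Fin (Fintype.card G.V)} {w : G.V} {k : ℕ} (hk : par^[k] w = L i) : w ∈ G.tail L i := by
  induction k generalizing w with
  | zero =>
    subst hk
    exact (L.symm_apply_apply _).ge
  | succ k ih =>
    have hpar : i ≤ L.symm (par w) := ih hk
    by_cases hw : par w = w
    · rwa [hw] at hpar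
    · exact hpar.trans (hlt w hw).le

theorem iterate_eq_of_mem_comp_tail (hedge : ∀ e a b, G.ends e = s(a, b) → par a = b ∨ par b = a)
    (hlt : ∀ v, par v ≠ v → L.symm (par v) < L.symm v) {i : Fin (Fintype.card G.V)} {w : G.V}
    (hw : w ∈ G.comp (G.tail L i) (L i)) : ∃ k, par^[k] w = L i := by
  induction hw with
  | refl => exact ⟨0, rfl⟩
  | @tail b c _ hstep ih =>
    obtain ⟨-, hc, e, he⟩ := hstep
    obtain ⟨k, hk⟩ := ih
    rcases hedge e b c he with hbc | hcb
    · cases k with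
      | zero =>
        subst hk hbc
        have hne : par (L i) ≠ L i := fun h =>
          G.loopless e (by rw [he, h]; exact Sym2.mk_isDiag_iff.2 rfl)
        exact absurd hc (not_le.2 (by simpa using hlt _ hne))
      | succ k => exact ⟨k, by rwa [← hbc]⟩
    · exact ⟨k + 1, by rwa [Function.iterate_succ_apply, hcb]⟩

theorem cost_le_one_of_parent (hinj : Function.Injective G.ends)
    (hedge : ∀ e a b, G.ends e = s(a, b) → par a = b ∨ par b = a)
    (hlt : ∀ v, par v ≠ v → L.symm (par v) < L.symm v) (i : Fin (Fintype.card G.V)) :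
    G.cost L i ≤ 1 := by
  set C := G.comp (G.tail L i) (L i)
  have hleave : ∀ e a b, G.ends e = s(a, b) → a ∈ C → b ∉ C → G.ends e = s(L i, par (L i)) := by
    intro e a b he ha hb
    obtain ⟨k, hk⟩ := iterate_eq_of_mem_comp_tail hedge hlt ha
    have hb_tail : b ∉ G.tail L i := fun hbt =>
      hb (.tail ha ⟨mem_tail_of_iterate_eq hlt hk, hbt, e, he⟩)
    rcases hedge e a b he with hab | hba
    · cases k with
      | zero => subst hk hab; exact he
      | succ k =>
        exact absurd (mem_tail_of_iterate_eq hlt (k := k) (by rwa [← hab])) hb_tail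
    · exact absurd (mem_tail_of_iterate_eq hlt (k := k + 1)
        (by rwa [Function.iterate_succ_apply, hba])) hb_tail
  have : Subsingleton {e : G.E // ∃ a b, G.ends e = s(a, b) ∧ a ∈ C ∧ b ∉ C} :=
    ⟨fun ⟨e, a, b, he, ha, hb⟩ ⟨f, a', b', hf, ha', hb'⟩ =>
      Subtype.ext (hinj ((hleave e a b he ha hb).trans (hleave f a' b' hf ha' hb').symm))⟩
  exact Finite.card_le_one_iff_subsingleton.2 this

end ParentLayout

variable (G) in
def toSimpleGraph : SimpleGraph G.V where
  Adj a b := ∃ e, G.ends e = s(a, b)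
  symm := ⟨fun _ _ ⟨e, he⟩ => ⟨e, he.trans Sym2.eq_swap⟩⟩
  loopless := ⟨fun _ ⟨e, he⟩ => G.loopless e (he ▸ Sym2.mk_isDiag_iff.2 rfl)⟩

variable (G) in
noncomputable def root (v : G.V) : G.V :=
  (G.toSimpleGraph.connectedComponentMk v).out

variable (G) in
noncomputable def depth (v : G.V) : ℕ :=
  G.toSimpleGraph.dist v (G.root v)

theorem reachable_root (v : G.V) : G.toSimpleGraph.Reachable v (G.root v) :=
  ConnectedComponent.exact (Quot.out_eq _).symm

theorem root_eq_of_adj {a b : G.V} (h : G.toSimpleGraph.Adj a b) : G.root a = G.root b := by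
  rw [root, root, ConnectedComponent.sound h.reachable]

theorem exists_adj_depth_lt {v : G.V} (h : v ≠ G.root v) :
    ∃ w, G.toSimpleGraph.Adj v w ∧ G.depth w < G.depth v := by
  obtain ⟨p, hp⟩ := (reachable_root v).exists_walk_length_eq_dist
  have hnil : ¬ p.Nil := fun hn => h hn.eq
  refine ⟨p.snd, p.adj_snd hnil, ?_⟩
  have hroot : G.root p.snd = G.root v := (root_eq_of_adj (p.adj_snd hnil)).symm
  have := SimpleGraph.dist_le p.tail
  have := p.length_tail_add_one hnil
  simp only [depth, hroot]
  omega

variable (G) in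
noncomputable def parent (v : G.V) : G.V :=
  if h : v = G.root v then v else (exists_adj_depth_lt h).choose

theorem adj_parent {v : G.V} (h : v ≠ G.root v) : G.toSimpleGraph.Adj v (G.parent v) := by
  rw [parent, dif_neg h]
  exact (exists_adj_depth_lt h).choose_spec.1

theorem depth_parent_lt {v : G.V} (h : v ≠ G.root v) : G.depth (G.parent v) < G.depth v := by
  rw [parent, dif_neg h]
  exact (exists_adj_depth_lt h).choose_spec.2

theorem depth_parent_lt_of_ne {v : G.V} (h : G.parent v ≠ v) : G.depth (G.parent v) < G.depth v :=
  depth_parent_lt fun hv => h (by rw [parent, dif_pos hv])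

theorem reflTransGen_root {R : G.V → G.V → Prop} (hR : ∀ v, v ≠ G.root v → R v (G.parent v))
    (v : G.V) : ReflTransGen R v (G.root v) := by
  by_cases h : v = G.root v
  · exact h ▸ .refl
  · have hpar := reflTransGen_root hR (G.parent v)
    rw [← root_eq_of_adj (adj_parent h)] at hpar
    exact .head (hR v h) hpar
termination_by G.depth v
decreasing_by exact depth_parent_lt h

theorem IsForest.parent_eq_or_parent_eq (hG : G.IsForest) {e : G.E} {a b : G.V}
    (he : G.ends e = s(a, b)) : G.parent a = b ∨ G.parent b = a := by
  -- Otherwise the parent chains of `a` and `b` avoid `e` and meet at the common root.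
  by_contra! hne
  let R : G.V → G.V → Prop := fun x y => ∃ f, f ≠ e ∧ G.ends f = s(x, y)
  have hR : ∀ v, v ≠ G.root v → R v (G.parent v) := by
    intro v hv
    obtain ⟨f, hf⟩ := adj_parent hv
    refine ⟨f, ?_, hf⟩
    rintro rfl
    rcases Sym2.eq_iff.1 (hf.symm.trans he) with ⟨rfl, h⟩ | ⟨rfl, h⟩
    exacts [hne.1 h, hne.2 h]
  have hb : ReflTransGen R (G.root a) b := by
    rw [root_eq_of_adj ⟨e, he⟩]
    exact ReflTransGen.mono (fun _ _ ⟨f, hf, hxy⟩ => ⟨f, hf, hxy.trans Sym2.eq_swap⟩) _ _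
      (reflTransGen_swap.2 (reflTransGen_root hR b))
  exact hG e a b he ((reflTransGen_root hR a).trans hb)

end FinMGraph

/-- Every forest `G` admits a layout `L` such that `max_i δ^ec(i) ≤ 1`,
i.e. `etw(G) ≤ 1`. -/
theorem forest_layout_cost_le_one (G : FinMGraph) (hG : G.IsForest) :
    (∃ L : Fin (Fintype.card G.V) ≃ G.V, ∀ i, G.cost L i ≤ 1) ∧ G.etw ≤ 1 := by
  obtain ⟨L, hL⟩ := exists_equiv_fin_lt_of_lt G.depth
  have hcost : ∀ i, G.cost L i ≤ 1 :=
    FinMGraph.cost_le_one_of_parent hG.injective_ends (fun _ _ _ => hG.parent_eq_or_parent_eq)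
      fun _ hv => hL _ _ (FinMGraph.depth_parent_lt_of_ne hv)
  exact ⟨⟨L, hcost⟩, Nat.sInf_le ⟨L, hcost⟩⟩
end
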